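/- If the center of a group G is torsion-free, then every factor Z_{k+1}(G)/Z_k(G) of the upper central series is torsion-free; in particular, if additionally G is nilpotent, G itself is torsion-free. -/

import Mathlib

/-!
If `⁅x, g⁆` commutes with `x` modulo `Z_k`, then `⁅x ^ n, g⁆ ≡ ⁅x, g⁆ ^ n` modulo `Z_k`. So for
`x ∈ Z_{k+2}` with `x ^ n ∈ Z_{k+1}`, every `⁅x, g⁆ ∈ Z_{k+1}` has `⁅x, g⁆ ^ n ∈ Z_k`, and induction
on `k` reduces the claim to the torsion-freeness of `Z_1 = Z(G)`. In a nilpotent group an element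
of finite order then descends the upper central series from `Z_c = G` down to `Z_0 = 1`.
-/

open commutatorElement

theorem commutatorElement_pow_left_of_commute {G : Type*} [Group G] {a b : G}
    (h : Commute a ⁅a, b⁆) (n : ℕ) : ⁅a ^ n, b⁆ = ⁅a, b⁆ ^ n := by
  induction n with
  | zero => simp
  | succ n ih =>
    rw [pow_succ', commutatorElement_mul_left_eq_conj_mul, ih, (h.pow_right n).eq, pow_succ]
    group

theorem commutatorElement_pow_left_mem_iff {G : Type*} [Group G] {N : Subgroup G} [N.Normal]
    {a b : G} (h : ⁅⁅a, b⁆, a⁆ ∈ N) (n : ℕ) : ⁅a ^ n, b⁆ ∈ N ↔ ⁅a, b⁆ ^ n ∈ N := by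
  let π := QuotientGroup.mk' N
  have mem_iff (x : G) : x ∈ N ↔ π x = 1 := by rw [← MonoidHom.mem_ker, QuotientGroup.ker_mk']
  have hcomm : Commute (π a) ⁅π a, π b⁆ := by
    rw [mem_iff, map_commutatorElement, commutatorElement_eq_one_iff_commute] at h
    simpa only [map_commutatorElement] using h.symm
  rw [mem_iff, mem_iff, map_pow, map_commutatorElement, map_pow, map_commutatorElement,
    commutatorElement_pow_left_of_commute hcomm]

namespace Subgroup

variable {G : Type*} [Group G]

theorem mem_upperCentralSeries_of_pow_mem (hZ : ∀ g : center G, g ≠ 1 → ¬IsOfFinOrder g)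
    {n : ℕ} (hn : n ≠ 0) :
    ∀ (k : ℕ) {x : G}, x ∈ upperCentralSeries G (k + 1) → x ^ n ∈ upperCentralSeries G k →
      x ∈ upperCentralSeries G k
  | 0, x, hx, hxn => by
    rw [upperCentralSeries_one] at hx
    rw [upperCentralSeries_zero, mem_bot] at hxn ⊢
    by_contra hx1
    exact hZ ⟨x, hx⟩ (Subtype.coe_ne_coe.1 hx1)
      (isOfFinOrder_iff_pow_eq_one.2 ⟨n, hn.bot_lt, Subtype.ext hxn⟩)
  | k + 1, x, hx, hxn => mem_upperCentralSeries_succ_iff.2 fun g ↦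
    mem_upperCentralSeries_of_pow_mem hZ hn k (hx g) <|
      (commutatorElement_pow_left_mem_iff (mem_upperCentralSeries_succ_iff.1 (hx g) x) n).1 (hxn g)

theorem eq_one_of_pow_eq_one_of_mem_upperCentralSeries
    (hZ : ∀ g : center G, g ≠ 1 → ¬IsOfFinOrder g) {n : ℕ} (hn : n ≠ 0) {x : G} (hxn : x ^ n = 1) :
    ∀ k : ℕ, x ∈ upperCentralSeries G k → x = 1
  | 0, hx => mem_bot.1 hx
  | k + 1, hx => eq_one_of_pow_eq_one_of_mem_upperCentralSeries hZ hn hxn k <|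
    mem_upperCentralSeries_of_pow_mem hZ hn k hx (hxn ▸ one_mem _)

end Subgroup

/-- If the center of a group `G` is torsion-free, then every factor
`Z_{k+1}(G)/Z_k(G)` of the upper central series is torsion-free; in particular,
if moreover `G` is nilpotent, then `G` itself is torsion-free. -/
theorem upperCentral_factors_torsionFree (G : Type*) [Group G]
    (hZ : ∀ g : Subgroup.center G, g ≠ 1 → ¬IsOfFinOrder g) :
    (∀ k : ℕ, ∀ x ∈ upperCentralSeries G (k + 1), ∀ n : ℕ, n ≠ 0 →
        x ^ n ∈ upperCentralSeries G k → x ∈ upperCentralSeries G k) ∧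
      (Group.IsNilpotent G → ∀ g : G, g ≠ 1 → ¬IsOfFinOrder g) := by
  refine ⟨fun k x hx n hn ↦ Subgroup.mem_upperCentralSeries_of_pow_mem hZ hn k hx, ?_⟩
  intro hG g hg hfin
  obtain ⟨c, hc⟩ := hG.nilpotent
  obtain ⟨n, hn, hgn⟩ := isOfFinOrder_iff_pow_eq_one.1 hfin
  exact hg <| Subgroup.eq_one_of_pow_eq_one_of_mem_upperCentralSeries hZ hn.ne' hgn c
    (hc ▸ Subgroup.mem_top g)
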